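/- Let μ₁, μ₂, α be nonnegative integers with μ₁ ≥ μ₂ ≥ α + 2, and set r = μ₁ − μ₂. Then ∑_{i=0}^{r} ∫_0^∞ (cosh t)^{2i − 2μ₁ − 2α − 4} sinh²(t) sinh(2t) dt = (r+1) / ((μ₂+α)(μ₁+α+1)). -/

import Mathlib

/-!
Since `sinh (2t) sinh² t = 2 sinh t cosh t (cosh² t - 1)`, the integrand with exponent
`-2m - 2` has the antiderivative `cosh^(2-2m) t / (1 - m) + cosh^(-2m) t / m`, which vanishes at
infinity for `m > 1`; so the integral is `1/(m-1) - 1/m`. The `i`-th summand is this integral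
with `m = μ₁ + α + 1 - i`, so the sum telescopes to `1/(μ₂ + α) - 1/(μ₁ + α + 1)`.
-/

open MeasureTheory

open Real Filter Topology

lemma Real.tendsto_cosh_atTop : Tendsto cosh atTop atTop := by
  refine tendsto_atTop_mono (fun x => ?_) (tendsto_exp_atTop.atTop_div_const two_pos)
  rw [cosh_eq]
  linarith [exp_pos (-x)]

lemma Real.tendsto_cosh_zpow_atTop_zero {n : ℤ} (hn : n < 0) :
    Tendsto (fun t => cosh t ^ n) atTop (𝓝 0) :=
  (tendsto_zpow_atTop_zero hn).comp tendsto_cosh_atTop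

lemma Real.hasDerivAt_cosh_zpow (n : ℤ) (x : ℝ) :
    HasDerivAt (fun t => cosh t ^ n) (n * cosh x ^ (n - 1) * sinh x) x :=
  (hasDerivAt_zpow n (cosh x) (.inl (cosh_pos x).ne')).comp x (hasDerivAt_cosh x)

lemma Real.integral_Ioi_cosh_zpow_mul_sinh_sq_mul_sinh_two_mul {m : ℤ} (hm : 1 < m) :
    ∫ t in Set.Ioi (0 : ℝ), cosh t ^ (-2 * m - 2) * sinh t ^ 2 * sinh (2 * t)
      = 1 / ((m : ℝ) - 1) - 1 / m := by
  have hm₀ : (m : ℝ) ≠ 0 := by positivity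
  have hm₁ : (m : ℝ) - 1 ≠ 0 := sub_ne_zero.2 (by exact_mod_cast hm.ne')
  have hm₁' : 1 - (m : ℝ) ≠ 0 := by rw [← neg_sub]; exact neg_ne_zero.2 hm₁
  set F : ℝ → ℝ := fun t => cosh t ^ (2 - 2 * m) / (1 - m) + cosh t ^ (-2 * m) / m
  have hF_deriv : ∀ x, HasDerivAt F (cosh x ^ (-2 * m - 2) * sinh x ^ 2 * sinh (2 * x)) x := by
    intro x
    refine (((hasDerivAt_cosh_zpow _ x).div_const _).add
      ((hasDerivAt_cosh_zpow _ x).div_const _)).congr_deriv ?_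
    have hc : cosh x ≠ 0 := (cosh_pos x).ne'
    rw [sinh_two_mul, sinh_sq, show 2 - 2 * m - 1 = (-2 * m - 2) + 3 by ring,
      show -2 * m - 1 = (-2 * m - 2) + 1 by ring, zpow_add₀ hc, zpow_add₀ hc]
    push_cast
    field_simp
    ring
  have h_nonneg : ∀ x ∈ Set.Ioi (0 : ℝ),
      0 ≤ cosh x ^ (-2 * m - 2) * sinh x ^ 2 * sinh (2 * x) := fun x hx => by
    have := zpow_pos (cosh_pos x) (-2 * m - 2)
    have := sinh_nonneg_iff.2 (mul_pos two_pos hx).le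
    positivity
  have hF_lim : Tendsto F atTop (𝓝 0) := by
    simpa only [zero_div, add_zero] using
      ((tendsto_cosh_zpow_atTop_zero (by omega : 2 - 2 * m < 0)).div_const (1 - (m : ℝ))).add
        ((tendsto_cosh_zpow_atTop_zero (by omega : -2 * m < 0)).div_const (m : ℝ))
  rw [integral_Ioi_of_hasDerivAt_of_nonneg (hF_deriv 0).continuousAt.continuousWithinAt
    (fun x _ => hF_deriv x) h_nonneg hF_lim]
  simp only [F, cosh_zero, one_zpow]
  field_simp
  ring

/-- The analytic core of the zeta-integral evaluation in case (C1, II):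
for `μ₁ ≥ μ₂ ≥ α + 2` and `r = μ₁ − μ₂`,
`∑_{i=0}^{r} ∫₀^∞ (cosh t)^{2i−2μ₁−2α−4} sinh²t sinh(2t) dt
  = (r+1)/((μ₂+α)(μ₁+α+1))`. -/
theorem stmt_15 (μ₁ μ₂ α r : ℕ) (h1 : μ₂ ≤ μ₁) (h2 : α + 2 ≤ μ₂)
    (hr : r = μ₁ - μ₂) :
    ∑ i ∈ Finset.range (r + 1),
        ∫ t in Set.Ioi (0 : ℝ),
          Real.cosh t ^ (2 * (i : ℤ) - 2 * (μ₁ : ℤ) - 2 * (α : ℤ) - 4) *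
            Real.sinh t ^ 2 * Real.sinh (2 * t)
      = ((r : ℝ) + 1) / (((μ₂ : ℝ) + α) * ((μ₁ : ℝ) + α + 1)) := by
  set g : ℕ → ℝ := fun i => 1 / ((μ₁ : ℝ) + α + 1 - i)
  have hterm : ∀ i ∈ Finset.range (r + 1),
      (∫ t in Set.Ioi (0 : ℝ),
          cosh t ^ (2 * (i : ℤ) - 2 * (μ₁ : ℤ) - 2 * (α : ℤ) - 4) * sinh t ^ 2 * sinh (2 * t))
        = g (i + 1) - g i := by
    intro i hi
    have hir : i ≤ r := Finset.mem_range_succ_iff.1 hi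
    rw [show 2 * (i : ℤ) - 2 * μ₁ - 2 * α - 4 = -2 * (μ₁ + α + 1 - i : ℤ) - 2 by ring,
      integral_Ioi_cosh_zpow_mul_sinh_sq_mul_sinh_two_mul (by omega)]
    simp only [g]
    push_cast
    ring
  rw [Finset.sum_congr rfl hterm, Finset.sum_range_sub g]
  have hr' : (r : ℝ) = μ₁ - μ₂ := by rw [hr, Nat.cast_sub h1]
  have hg_last : g (r + 1) = 1 / ((μ₂ : ℝ) + α) := by
    simp only [g]
    congr 1
    push_cast
    rw [hr']
    ring
  have hμ₂ : (μ₂ : ℝ) + α ≠ 0 := by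
    have : 0 < μ₂ := by omega
    positivity
  rw [hg_last, hr']
  simp only [g, CharP.cast_eq_zero, sub_zero]
  field_simp
  ring
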